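/- If all weights in the hidden-to-hidden matrices W_1,...,W_{k-1} are non-negative and all activation functions are convex and non-decreasing, then the input-convex neural network defined by z_1 = σ_0(U_0 x + b_0), z_{i+1} = σ_i(W_i z_i + U_i x + b_i) is convex as a function of the input x. -/
import Mathlib


noncomputable def icnn (n : ℕ) (d : ℕ → ℕ) (σ : ℕ → ℝ → ℝ)
    (W : ∀ i : ℕ, Matrix (Fin (d (i+1))) (Fin (d i)) ℝ)
    (U : ∀ i : ℕ, Matrix (Fin (d i)) (Fin n) ℝ)
    (b : ∀ i : ℕ, Fin (d i) → ℝ) : (i : ℕ) → (Fin n → ℝ) → Fin (d i) → ℝ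
  | 0 => fun x j => σ 0 ((U 0).mulVec x j + b 0 j)
  | (i+1) => fun x j =>
      σ (i+1) ((W i).mulVec (icnn n d σ W U b i x) j + (U (i+1)).mulVec x j + b (i+1) j)

private lemma affine_convexOn {m n : ℕ} (U : Matrix (Fin m) (Fin n) ℝ) (j : Fin m) (c : ℝ) :
    ConvexOn ℝ Set.univ (fun x : Fin n → ℝ => U.mulVec x j + c) := by
  refine ⟨convex_univ, fun x _ y _ a bb ha hb hab => ?_⟩
  simp only [Matrix.mulVec_add, Matrix.mulVec_smul, Pi.add_apply, Pi.smul_apply,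
    smul_eq_mul, mul_add, mul_add]
  linarith [mul_comm a c, mul_comm bb c, (by rw [← add_mul, hab, one_mul] : a * c + bb * c = c)]

private lemma sum_convex {n : ℕ} {ι : Type*} (t : Finset ι) (f : ι → (Fin n → ℝ) → ℝ)
    (h : ∀ l ∈ t, ConvexOn ℝ Set.univ (f l)) :
    ConvexOn ℝ Set.univ (fun x => ∑ l ∈ t, f l x) := by
  induction t using Finset.cons_induction with
  | empty => simpa using convexOn_const 0 convex_univ
  | cons a t ha ih =>
      simp only [Finset.sum_cons]
      exact (h a (Finset.mem_cons_self a t)).add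
        (ih fun l hl => h l (Finset.mem_cons_of_mem hl))

private lemma comp_convex {n : ℕ} {g : (Fin n → ℝ) → ℝ} (hg : ConvexOn ℝ Set.univ g)
    {σ : ℝ → ℝ} (hσ : ConvexOn ℝ Set.univ σ) (hm : Monotone σ) :
    ConvexOn ℝ Set.univ (fun x => σ (g x)) := by
  refine ⟨convex_univ, fun x _ y _ a bb ha hb hab => ?_⟩
  calc σ (g (a • x + bb • y)) ≤ σ (a • g x + bb • g y) :=
        hm (hg.2 trivial trivial ha hb hab)
    _ ≤ a • σ (g x) + bb • σ (g y) := hσ.2 trivial trivial ha hb hab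

/-- If all hidden-to-hidden weight matrices have non-negative entries and all activation
functions are convex and non-decreasing, then every component of every layer of the ICNN
is convex as a function of the input `x`. -/
theorem icnn_convex (n : ℕ) (d : ℕ → ℕ) (σ : ℕ → ℝ → ℝ)
    (W : ∀ i : ℕ, Matrix (Fin (d (i+1))) (Fin (d i)) ℝ)
    (U : ∀ i : ℕ, Matrix (Fin (d i)) (Fin n) ℝ)
    (b : ∀ i : ℕ, Fin (d i) → ℝ)
    (hW : ∀ i j l, 0 ≤ W i j l)
    (hσconv : ∀ i, ConvexOn ℝ Set.univ (σ i))
    (hσmono : ∀ i, Monotone (σ i)) :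
    ∀ (i : ℕ) (j : Fin (d i)), ConvexOn ℝ Set.univ (fun x => icnn n d σ W U b i x j) := by
  intro i
  induction i with
  | zero =>
      intro j
      exact comp_convex (affine_convexOn (U 0) j (b 0 j)) (hσconv 0) (hσmono 0)
  | succ i ih =>
      intro j
      refine comp_convex ?_ (hσconv (i+1)) (hσmono (i+1))
      have h1 : ConvexOn ℝ Set.univ
          (fun x => ∑ l, W i j l * icnn n d σ W U b i x l) := by
        refine sum_convex _ _ fun l _ => ?_
        simpa [smul_eq_mul] using (ih l).smul (hW i j l)
      have h2 := affine_convexOn (U (i+1)) j (b (i+1) j)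
      have := h1.add h2
      have heq : (fun x => (W i).mulVec (icnn n d σ W U b i x) j +
          (U (i+1)).mulVec x j + b (i+1) j) =
          ((fun x => ∑ l, W i j l * icnn n d σ W U b i x l) +
           fun x => (U (i+1)).mulVec x j + b (i+1) j) := by
        funext x
        simp [Matrix.mulVec, dotProduct, add_assoc]
      rw [heq]
      exact this
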